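/- Every bipartite graph that is a (2^{k-1}, 2^{k-1})-expander admits an on-line greedy matching strategy serving up to 2^k requests with at most 2^{k-1} rejections. -/

import Mathlib

/-- Number of rejections of the greedy on-line matching strategy which matches each arriving
left vertex to an arbitrary yet-unused neighbor, if one exists, and rejects it otherwise. -/
noncomputable def greedyRejects {L R : Type*} [DecidableEq R]
    (N : L → Finset R) : List L → Finset R → ℕ
  | [], _ => 0
  | x :: xs, used =>
    if h : (N x \ used).Nonempty then
      greedyRejects N xs (insert h.choose used)
    else
      greedyRejects N xs used + 1

private lemma greedy_aux {L R : Type*} [DecidableEq R] (N : L → Finset R) :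
    ∀ (xs : List L) (used : Finset R) (j : ℕ), xs.Nodup →
      j + 1 ≤ greedyRejects N xs used →
      ∃ (S : Finset L) (U : Finset R), (∀ x ∈ S, x ∈ xs) ∧ S.card = j ∧
        used ⊆ U ∧ S.biUnion N ⊆ U ∧ U.card + j + 1 ≤ used.card + xs.length := by
  classical
  intro xs
  induction xs with
  | nil =>
    intro used j _ hge
    simp [greedyRejects] at hge
  | cons x xs ih =>
    intro used j hnd hge
    rw [greedyRejects] at hge
    rcases List.nodup_cons.mp hnd with ⟨hx, hnd'⟩
    split_ifs at hge with h
    · obtain ⟨S, U, hmem, hcard, hused, hsub, hcount⟩ := ih (insert h.choose used) j hnd' hge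
      refine ⟨S, U, fun y hy => List.mem_cons_of_mem _ (hmem y hy), hcard,
        (Finset.subset_insert _ _).trans hused, hsub, ?_⟩
      calc U.card + j + 1 ≤ (insert h.choose used).card + xs.length := hcount
        _ ≤ (used.card + 1) + xs.length := by
            have := Finset.card_insert_le h.choose used; omega
        _ = used.card + (x :: xs).length := by simp; omega
    · rcases j with _ | j'
      · exact ⟨∅, used, by simp, by simp, subset_rfl, by simp, by simp⟩
      · have hge' : j' + 1 ≤ greedyRejects N xs used := by omega
        obtain ⟨S, U, hmem, hcard, hused, hsub, hcount⟩ := ih used j' hnd' hge'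
        have hxS : x ∉ S := fun hxS => hx (hmem x hxS)
        have hNx : N x ⊆ used := by
          intro r hr
          by_contra hru
          exact h ⟨r, Finset.mem_sdiff.mpr ⟨hr, hru⟩⟩
        refine ⟨insert x S, U, ?_, ?_, hused, ?_, ?_⟩
        · intro y hy
          rcases Finset.mem_insert.mp hy with rfl | hy
          · exact List.mem_cons_self
          · exact List.mem_cons_of_mem _ (hmem y hy)
        · rw [Finset.card_insert_of_notMem hxS, hcard]
        · rw [Finset.biUnion_insert]
          exact Finset.union_subset (hNx.trans hused) hsub
        · simp; omega
  
/-- every `(2^{k-1}, 2^{k-1})`-expander admits on-line greedy matching of up to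
`2^k` requests with at most `2^{k-1}` rejections. -/
theorem stmt4 {L R : Type*} [DecidableEq R]
    (N : L → Finset R) (k : ℕ) (hk : 1 ≤ k)
    (hexp : ∀ S : Finset L, S.card = 2 ^ (k - 1) →
        2 ^ (k - 1) ≤ (S.biUnion N).card)
    (xs : List L) (hnd : xs.Nodup) (hlen : xs.length ≤ 2 ^ k) :
    greedyRejects N xs ∅ ≤ 2 ^ (k - 1) := by
  by_contra hcon
  push_neg at hcon
  obtain ⟨S, U, _, hcard, _, hsub, hcount⟩ := greedy_aux N xs ∅ (2 ^ (k - 1)) hnd hcon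
  have h1 : 2 ^ (k - 1) ≤ U.card :=
    (hexp S hcard).trans (Finset.card_le_card hsub)
  have h2 : 2 ^ k = 2 * 2 ^ (k - 1) := by
    rw [← pow_succ']
    congr 1
    omega
  simp only [Finset.card_empty, zero_add] at hcount
  omega
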